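/- Let w be a p-string, let d be the number of distinct parameterized characters occurring in w, let x₁ < x₂ < ⋯ < x_d be the d smallest elements of Π, and let y₁, y₂, …, y_d be the distinct parameterized characters of w listed in order of their first occurrence in w. Then the string obtained from w by replacing every occurrence of y_j with x_j (for each 1 ≤ j ≤ d) and leaving static characters unchanged equals spe(w), the lexicographically smallest p-string p-matching w. -/

import Mathlib

/-!
Let `σ` be a permutation of `Π` sending each `y j` to `x j`; the replacement is `w` mapped by
`σ` (extended by the identity on `Σ`), so it p-matches `w`. If some `f(w)` with `f` a
p-matching bijection were smaller, look at the first position `i` where they differ. As `f`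
fixes static characters, `w[i]` is a parameterized character `y j`, and `f (y j) < x j` is then
some `x j'` with `j' < j`. But the first occurrence of `y j'` comes before that of `y j`, hence
before `i`, so there already `f (y j') = x j'`, contradicting the injectivity of `f`.
-/

/-- p-match over the ordered character alphabet `Lex (P ⊕ S)` (parameterized characters
`Sum.inl` are smaller than static characters `Sum.inr`). -/
def PMatch {S P : Type*} (x y : List (Lex (P ⊕ S))) : Prop :=
  ∃ f : Lex (P ⊕ S) → Lex (P ⊕ S), Function.Bijective f ∧
    (∀ s : S, f (toLex (Sum.inr s)) = toLex (Sum.inr s)) ∧ x = y.map f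

/-- `s` is the smallest parameterized encoding `spe(w)` of `w`:
the lexicographically smallest p-string p-matching `w`. -/
def IsSpe {S P : Type*} [LinearOrder S] [LinearOrder P]
    (w s : List (Lex (P ⊕ S))) : Prop :=
  PMatch s w ∧ ∀ s' : List (Lex (P ⊕ S)), PMatch s' w → s ≤ s'

open Function

-- `List.idxOf` on `Lex (P ⊕ S)` goes through the derived `BEq` of `Sum`, not `DecidableEq`.
instance Sum.instLawfulBEq {α β : Type*} [BEq α] [BEq β] [LawfulBEq α] [LawfulBEq β] :
    LawfulBEq (α ⊕ β) where
  eq_of_beq {a b} h := by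
    cases a <;> cases b <;> first | exact congrArg _ (eq_of_beq h) | cases h
  rfl {a} := by cases a <;> rename_i v <;> exact beq_self_eq_true v

namespace List

variable {α : Type*}

theorem idxOf_le_of_getElem?_eq_some [BEq α] [LawfulBEq α] {l : List α} {i : ℕ} {a : α}
    (h : l[i]? = some a) : l.idxOf a ≤ i := by
  obtain ⟨hi, rfl⟩ := getElem?_eq_some_iff.mp h
  by_contra! hlt
  simpa using not_of_lt_findIdx hlt

theorem getElem?_idxOf_of_mem [BEq α] [LawfulBEq α] {l : List α} {a : α} (h : a ∈ l) :
    l[l.idxOf a]? = some a := by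
  have hlt := idxOf_lt_length_iff.mpr h
  rw [getElem?_eq_getElem hlt, getElem_idxOf hlt]

theorem map_le_map_of_forall_agree_lt {β : Type*} [LinearOrder β] {f g : α → β} {l : List α}
    (h : ∀ i (hi : i < l.length), (∀ k (hk : k < i), f l[k] = g l[k]) → f l[i] ≤ g l[i]) :
    l.map f ≤ l.map g := by
  rw [← not_lt, List.lt_iff_exists]
  rintro (⟨-, hlen⟩ | ⟨i, hi, _, hagree, hlt⟩)
  · simp at hlen
  · simp only [length_map, getElem_map] at hi hagree hlt
    exact (h i hi fun k hk => (hagree k hk).symm).not_gt hlt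

end List

theorem Sum.Lex.exists_eq_inl_of_lt_inl {α β : Type*} [LT α] [LT β] {u : α ⊕ₗ β} {b : α}
    (h : u < toLex (Sum.inl b)) : ∃ a, u = toLex (Sum.inl a) ∧ a < b := by
  cases u with | _ u => ?_
  rcases u with a | c
  · exact ⟨a, rfl, Sum.Lex.inl_lt_inl_iff.mp h⟩
  · exact absurd h Sum.Lex.not_inr_lt_inl

theorem Equiv.Perm.exists_apply_eq_of_injective {ι α : Type*} [Finite ι] {f g : ι → α}
    (hf : Injective f) (hg : Injective g) : ∃ σ : Equiv.Perm α, ∀ i, σ (f i) = g i := by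
  let e : Set.range f ↪ α := (Equiv.ofInjective f hf).symm.toEmbedding.trans ⟨g, hg⟩
  obtain ⟨σ, hσ⟩ : ∃ σ : Equiv.Perm α, ∀ a : Set.range f, σ a = e a := by
    cases finite_or_infinite α
    · exact Cardinal.extend_function_finite e ⟨Equiv.refl α⟩
    · refine Cardinal.extend_function_of_lt e ?_ ⟨Equiv.refl α⟩
      exact (Cardinal.lt_aleph0_of_finite _).trans_le (Cardinal.aleph0_le_mk α)
  exact ⟨σ, fun i => by simpa [e] using hσ ⟨f i, i, rfl⟩⟩

section Replacement

variable {S P : Type*}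

def paramPerm (σ : Equiv.Perm P) : Equiv.Perm (Lex (P ⊕ S)) :=
  ofLex.trans ((σ.sumCongr (Equiv.refl S)).trans toLex)

@[simp]
theorem paramPerm_inl (σ : Equiv.Perm P) (p : P) :
    paramPerm (S := S) σ (toLex (Sum.inl p)) = toLex (Sum.inl (σ p)) := rfl

@[simp]
theorem paramPerm_inr (σ : Equiv.Perm P) (s : S) :
    paramPerm σ (toLex (Sum.inr s)) = toLex (Sum.inr s) := rfl

theorem pmatch_map_paramPerm (σ : Equiv.Perm P) (w : List (Lex (P ⊕ S))) :
    PMatch (w.map (paramPerm σ)) w :=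
  ⟨paramPerm σ, (paramPerm σ).bijective, paramPerm_inr σ, rfl⟩

variable {w z : List (Lex (P ⊕ S))} {d : ℕ} {x y : Fin d → P}

theorem eq_map_paramPerm_of_replacement {σ : Equiv.Perm P} (hσ : ∀ j, σ (y j) = x j)
    (hy_all : ∀ p : P, toLex (Sum.inl p) ∈ w → ∃ j : Fin d, y j = p)
    (hz_len : z.length = w.length)
    (hz_static : ∀ (i : ℕ) (s : S), w[i]? = some (toLex (Sum.inr s)) → z[i]? = w[i]?)
    (hz_param : ∀ (i : ℕ) (j : Fin d), w[i]? = some (toLex (Sum.inl (y j))) →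
      z[i]? = some (toLex (Sum.inl (x j)))) :
    z = w.map (paramPerm σ) := by
  refine List.ext_getElem? fun i => ?_
  rw [List.getElem?_map]
  rcases hw : w[i]? with _ | u
  · exact List.getElem?_eq_none (hz_len ▸ List.getElem?_eq_none_iff.mp hw)
  cases u with | _ u => ?_
  rcases u with p | s
  · obtain ⟨j, rfl⟩ := hy_all p (List.mem_of_getElem? hw)
    simpa [hσ] using hz_param i j hw
  · simpa [hw] using hz_static i s hw

theorem inl_le_apply_of_agree [LinearOrder S] [LinearOrder P] {σ : Equiv.Perm P}
    (hσ : ∀ j, σ (y j) = x j) (hx_mono : StrictMono x)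
    (hx_smallest : ∀ (p : P) (j : Fin d), p < x j → ∃ j' : Fin d, x j' = p)
    (hy_mem : ∀ j : Fin d, toLex (Sum.inl (y j)) ∈ w)
    (hy_firstocc : StrictMono fun j => w.idxOf (toLex (Sum.inl (y j))))
    {f : Lex (P ⊕ S) → Lex (P ⊕ S)} (hf : Injective f) {i : ℕ}
    (hagree : ∀ k (hk : k < w.length), k < i → paramPerm σ w[k] = f w[k])
    {j : Fin d} (hj : w.idxOf (toLex (Sum.inl (y j))) ≤ i) :
    toLex (Sum.inl (x j)) ≤ f (toLex (Sum.inl (y j))) := by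
  by_contra! hlt
  obtain ⟨p, hfy, hp⟩ := Sum.Lex.exists_eq_inl_of_lt_inl hlt
  obtain ⟨j', rfl⟩ := hx_smallest p j hp
  have hj'j : j' < j := hx_mono.lt_iff_lt.mp hp
  obtain ⟨hk, hwk⟩ := List.getElem?_eq_some_iff.mp (List.getElem?_idxOf_of_mem (hy_mem j'))
  have hfy' : f (toLex (Sum.inl (y j'))) = toLex (Sum.inl (x j')) := by
    rw [← hσ, ← paramPerm_inl (S := S), ← hwk]
    exact (hagree _ hk ((hy_firstocc hj'j).trans_le hj)).symm
  have hy_inj : Injective y := fun a b h => hy_firstocc.injective (by simp only [h])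
  exact hj'j.ne (hy_inj (Sum.inl_injective (toLex.injective (hf (hfy'.trans hfy.symm)))))

theorem map_paramPerm_le_map [LinearOrder S] [LinearOrder P] {σ : Equiv.Perm P}
    (hσ : ∀ j, σ (y j) = x j) (hx_mono : StrictMono x)
    (hx_smallest : ∀ (p : P) (j : Fin d), p < x j → ∃ j' : Fin d, x j' = p)
    (hy_mem : ∀ j : Fin d, toLex (Sum.inl (y j)) ∈ w)
    (hy_all : ∀ p : P, toLex (Sum.inl p) ∈ w → ∃ j : Fin d, y j = p)
    (hy_firstocc : StrictMono fun j => w.idxOf (toLex (Sum.inl (y j))))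
    {f : Lex (P ⊕ S) → Lex (P ⊕ S)} (hf : Injective f)
    (hf_inr : ∀ s : S, f (toLex (Sum.inr s)) = toLex (Sum.inr s)) :
    w.map (paramPerm σ) ≤ w.map f := by
  refine List.map_le_map_of_forall_agree_lt fun i hi hagree => ?_
  obtain ⟨u, hu⟩ : ∃ u, w[i] = toLex u := ⟨ofLex w[i], rfl⟩
  rw [hu]
  rcases u with p | s
  · obtain ⟨j, rfl⟩ := hy_all p (hu ▸ List.getElem_mem hi)
    rw [paramPerm_inl, hσ]
    refine inl_le_apply_of_agree hσ hx_mono hx_smallest hy_mem hy_firstocc hf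
      (fun k _ hki => hagree k hki) (List.idxOf_le_of_getElem?_eq_some ?_)
    rw [List.getElem?_eq_getElem hi, hu]
  · rw [paramPerm_inr, hf_inr]

end Replacement

theorem replacement_is_spe_general {S P : Type*} [LinearOrder S] [LinearOrder P]
    (w z : List (Lex (P ⊕ S))) (d : ℕ) (x y : Fin d → P)
    (hx_mono : StrictMono x)
    (hx_smallest : ∀ (p : P) (j : Fin d), p < x j → ∃ j' : Fin d, x j' = p)
    (hy_mem : ∀ j : Fin d, toLex (Sum.inl (y j)) ∈ w)
    (hy_all : ∀ p : P, toLex (Sum.inl p) ∈ w → ∃ j : Fin d, y j = p)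
    (hy_firstocc : ∀ j k : Fin d, j < k →
      List.idxOf (toLex (Sum.inl (y j))) w < List.idxOf (toLex (Sum.inl (y k))) w)
    (hz_len : z.length = w.length)
    (hz_static : ∀ (i : ℕ) (s : S), w[i]? = some (toLex (Sum.inr s)) → z[i]? = w[i]?)
    (hz_param : ∀ (i : ℕ) (j : Fin d), w[i]? = some (toLex (Sum.inl (y j))) →
      z[i]? = some (toLex (Sum.inl (x j)))) :
    IsSpe w z := by
  have hocc_mono : StrictMono fun j => w.idxOf (toLex (Sum.inl (y j))) :=
    fun j k => hy_firstocc j k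
  have hy_inj : Injective y := fun a b h => hocc_mono.injective (by simp only [h])
  obtain ⟨σ, hσ⟩ := Equiv.Perm.exists_apply_eq_of_injective hy_inj hx_mono.injective
  rw [eq_map_paramPerm_of_replacement hσ hy_all hz_len hz_static hz_param]
  refine ⟨pmatch_map_paramPerm σ w, ?_⟩
  rintro _ ⟨f, hf, hf_inr, rfl⟩
  exact map_paramPerm_le_map hσ hx_mono hx_smallest hy_mem hy_all hocc_mono hf.injective
    hf_inr

/-- let `d` be the number of distinct parameterized characters of `w`,
`x 0 < x 1 < ⋯ < x (d-1)` the `d` smallest elements of `Π`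
(strictly monotone and downward closed in `Π`), and `y 0, …, y (d-1)` the distinct
parameterized characters of `w` listed in order of first occurrence
(all occur in `w`, every parameterized character of `w` is some `y j`, and first
occurrences are increasing).  Then the string `z` obtained from `w` by replacing each
occurrence of `y j` by `x j` and leaving static characters unchanged is `spe(w)`,
the lexicographically smallest p-string p-matching `w`. -/
theorem replacement_is_spe {S P : Type*} [LinearOrder S] [LinearOrder P]
    [WellFoundedLT P] (w z : List (Lex (P ⊕ S))) (d : ℕ) (x y : Fin d → P)
    (hx_mono : StrictMono x)
    (hx_smallest : ∀ (p : P) (j : Fin d), p < x j → ∃ j' : Fin d, x j' = p)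
    (hy_mem : ∀ j : Fin d, toLex (Sum.inl (y j)) ∈ w)
    (hy_all : ∀ p : P, toLex (Sum.inl p) ∈ w → ∃ j : Fin d, y j = p)
    (hy_firstocc : ∀ j k : Fin d, j < k →
      List.idxOf (toLex (Sum.inl (y j))) w < List.idxOf (toLex (Sum.inl (y k))) w)
    (hz_len : z.length = w.length)
    (hz_static : ∀ (i : ℕ) (s : S), w[i]? = some (toLex (Sum.inr s)) → z[i]? = w[i]?)
    (hz_param : ∀ (i : ℕ) (j : Fin d), w[i]? = some (toLex (Sum.inl (y j))) →
      z[i]? = some (toLex (Sum.inl (x j)))) :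
    IsSpe w z :=
  replacement_is_spe_general w z d x y hx_mono hx_smallest hy_mem hy_all hy_firstocc hz_len
    hz_static hz_param
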